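/- For a kei X and a ∈ X, the map h'_a = h_a + *_a∘h_a, where h_a appends a as the last coordinate and *_a applies *a to every coordinate, is a chain map from C_n^R(X) to C_{n+1}^R(X). -/

import Mathlib

/-!
Right distributivity makes `*_a` a chain map, and involutivity makes it an involution.
Appending `a` commutes with every face except the last one, which turns `h_a x` back into
`x - x * a`; so `∂ h_a = h_a ∂ + (-1)^n (1 - *_a)`. Therefore
`∂ (1 + *_a) h_a = (1 + *_a) ∂ h_a = (1 + *_a) h_a ∂ + (-1)^n (1 - *_a ∘ *_a)`,
and the last term vanishes.
-/

/-- Delete the `i`-th coordinate of a tuple. -/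
def delF {X : Type*} {n : ℕ} (i : Fin (n + 1)) (x : Fin (n + 1) → X) : Fin n → X :=
  fun j => x (i.succAbove j)

/-- Delete the `i`-th coordinate, acting by `* x_i` on the earlier coordinates. -/
def delS {X : Type*} (op : X → X → X) {n : ℕ} (i : Fin (n + 1)) (x : Fin (n + 1) → X) :
    Fin n → X :=
  fun j => if (j : ℕ) < (i : ℕ) then op (x (Fin.castSucc j)) (x i) else x (i.succAbove j)

/-- The rack boundary of a generator (tuples indexed from 0; the paper's index `i ∈ {2,…,n}`
corresponds to `i ∈ {1,…,n}` here, with sign `(-1)^(i+1)`). -/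
noncomputable def bdryGen {X : Type*} (op : X → X → X) {n : ℕ} (x : Fin (n + 1) → X) :
    (Fin n → X) →₀ ℤ :=
  ∑ i : Fin (n + 1), if (i : ℕ) = 0 then 0 else
    ((-1 : ℤ) ^ ((i : ℕ) + 1)) •
      (Finsupp.single (delF i x) 1 - Finsupp.single (delS op i x) 1)

/-- The rack boundary map `∂ : C^R_{n+1}(X) → C^R_n(X)`. -/
noncomputable def bdry {X : Type*} (op : X → X → X) (n : ℕ) :
    ((Fin (n + 1) → X) →₀ ℤ) →ₗ[ℤ] ((Fin n → X) →₀ ℤ) :=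
  Finsupp.lsum ℤ fun x => LinearMap.toSpanSingleton ℤ _ (bdryGen op x)

/-- The chain map `*_a`, applying `* a` to every coordinate. -/
noncomputable def starMap {X : Type*} (op : X → X → X) (a : X) (m : ℕ) :
    ((Fin m → X) →₀ ℤ) →ₗ[ℤ] ((Fin m → X) →₀ ℤ) :=
  Finsupp.lsum ℤ fun x =>
    LinearMap.toSpanSingleton ℤ _ (Finsupp.single (fun j => op (x j) a) 1)

/-- The map `h_a`, appending `a` as the last coordinate. -/
noncomputable def hmap {X : Type*} (a : X) (m : ℕ) :
    ((Fin m → X) →₀ ℤ) →ₗ[ℤ] ((Fin (m + 1) → X) →₀ ℤ) :=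
  Finsupp.lsum ℤ fun x => LinearMap.toSpanSingleton ℤ _ (Finsupp.single (Fin.snoc x a) 1)

section RackChains

variable {X : Type*} (op : X → X → X) (a : X) {n : ℕ}

lemma bdry_single (x : Fin (n + 1) → X) : bdry op n (Finsupp.single x 1) = bdryGen op x := by
  simp [bdry]

lemma starMap_single (x : Fin n → X) :
    starMap op a n (Finsupp.single x 1) = Finsupp.single (fun j => op (x j) a) 1 := by
  simp [starMap]

lemma hmap_single (x : Fin n → X) :
    hmap a n (Finsupp.single x 1) = Finsupp.single (Fin.snoc x a) 1 := by
  simp [hmap]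

lemma starMap_comp_starMap (hinv : ∀ x b : X, op (op x b) b = x) (m : ℕ) :
    starMap op a m ∘ₗ starMap op a m = LinearMap.id := by
  ext x
  simp [starMap_single, hinv]

lemma delS_op_right (hdist : ∀ a b c : X, op (op a b) c = op (op a c) (op b c))
    (i : Fin (n + 1)) (y : Fin (n + 1) → X) :
    delS op i (fun j => op (y j) a) = fun j => op (delS op i y j) a := by
  funext j
  by_cases hj : (j : ℕ) < i
  · simp only [delS, if_pos hj]
    exact (hdist _ _ _).symm
  · simp only [delS, if_neg hj]

lemma bdryGen_op_right (hdist : ∀ a b c : X, op (op a b) c = op (op a c) (op b c))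
    (y : Fin (n + 1) → X) :
    bdryGen op (fun j => op (y j) a) = starMap op a n (bdryGen op y) := by
  simp only [bdryGen, map_sum]
  refine Finset.sum_congr rfl fun i _ => ?_
  split_ifs
  · rw [map_zero]
  · rw [map_zsmul, map_sub, starMap_single, starMap_single, delS_op_right op a hdist]
    rfl

lemma bdry_comp_starMap (hdist : ∀ a b c : X, op (op a b) c = op (op a c) (op b c)) :
    bdry op n ∘ₗ starMap op a (n + 1) = starMap op a n ∘ₗ bdry op n := by
  ext y
  simp [bdry_single, starMap_single, bdryGen_op_right op a hdist]

lemma delF_castSucc_snoc (i : Fin (n + 1)) (x : Fin (n + 1) → X) :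
    delF i.castSucc (Fin.snoc x a) = Fin.snoc (delF i x) a := by
  funext j
  induction j using Fin.lastCases with
  | last => simp [delF]
  | cast j => simp [delF, Fin.castSucc_succAbove_castSucc]

lemma delS_castSucc_snoc (i : Fin (n + 1)) (x : Fin (n + 1) → X) :
    delS op i.castSucc (Fin.snoc x a) = Fin.snoc (delS op i x) a := by
  funext j
  induction j using Fin.lastCases with
  | last =>
    have hlast : ¬ (Fin.last n : ℕ) < i.castSucc := by simpa using i.is_le
    simp only [delS, if_neg hlast, Fin.succAbove_castSucc_of_le _ _ (Fin.le_last i),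
      Fin.succ_last, Fin.snoc_last]
  | cast j =>
    by_cases hj : (j : ℕ) < i
    · simp [delS, hj]
    · simp [delS, hj, Fin.castSucc_succAbove_castSucc]

lemma delF_last_snoc (x : Fin (n + 1) → X) : delF (Fin.last (n + 1)) (Fin.snoc x a) = x := by
  funext j
  simp [delF]

lemma delS_last_snoc (x : Fin (n + 1) → X) :
    delS op (Fin.last (n + 1)) (Fin.snoc x a) = fun j => op (x j) a := by
  funext j
  simp [delS, j.isLt]

lemma bdryGen_snoc (x : Fin (n + 1) → X) :
    bdryGen op (Fin.snoc x a : Fin (n + 2) → X) =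
      hmap a n (bdryGen op x) +
        (-1 : ℤ) ^ n • (Finsupp.single x 1 - Finsupp.single (fun j => op (x j) a) 1) := by
  rw [bdryGen, Fin.sum_univ_castSucc, bdryGen, map_sum]
  congr 1
  · refine Finset.sum_congr rfl fun i _ => ?_
    simp only [Fin.val_castSucc]
    split_ifs
    · rw [map_zero]
    · rw [map_zsmul, map_sub, hmap_single, hmap_single, delF_castSucc_snoc,
        delS_castSucc_snoc]
  · rw [if_neg (by simp), delF_last_snoc, delS_last_snoc, Fin.val_last, pow_add, pow_add]
    simp

lemma bdry_comp_hmap :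
    bdry op (n + 1) ∘ₗ hmap a (n + 1) =
      hmap a n ∘ₗ bdry op n + (-1 : ℤ) ^ n • (LinearMap.id - starMap op a (n + 1)) := by
  refine Finsupp.lhom_ext' fun x => LinearMap.ext_ring ?_
  simp only [LinearMap.comp_apply, LinearMap.add_apply, LinearMap.smul_apply,
    LinearMap.sub_apply, LinearMap.id_apply, Finsupp.lsingle_apply, bdry_single, hmap_single,
    starMap_single, bdryGen_snoc]

end RackChains

theorem hprime_chain_map_general {X : Type*} (op : X → X → X)
    (hinv : ∀ x b : X, op (op x b) b = x)
    (hdist : ∀ a b c : X, op (op a b) c = op (op a c) (op b c)) (a : X) (n : ℕ) :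
    (bdry op (n + 1)) ∘ₗ
        (hmap a (n + 1) + (starMap op a (n + 2)) ∘ₗ hmap a (n + 1)) =
      (hmap a n + (starMap op a (n + 1)) ∘ₗ hmap a n) ∘ₗ (bdry op n) := by
  calc bdry op (n + 1) ∘ₗ (hmap a (n + 1) + starMap op a (n + 2) ∘ₗ hmap a (n + 1))
      = (LinearMap.id + starMap op a (n + 1)) ∘ₗ (bdry op (n + 1) ∘ₗ hmap a (n + 1)) := by
        rw [LinearMap.comp_add, ← LinearMap.comp_assoc, bdry_comp_starMap op a hdist,
          LinearMap.add_comp, LinearMap.id_comp, LinearMap.comp_assoc]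
    _ = (hmap a n + starMap op a (n + 1) ∘ₗ hmap a n) ∘ₗ bdry op n +
          (-1 : ℤ) ^ n • (LinearMap.id - starMap op a (n + 1) ∘ₗ starMap op a (n + 1)) := by
        rw [bdry_comp_hmap]
        simp only [LinearMap.comp_add, LinearMap.add_comp, LinearMap.comp_smul,
          LinearMap.comp_sub, LinearMap.id_comp, LinearMap.comp_id, LinearMap.comp_assoc]
        rw [add_comm LinearMap.id, add_sub_add_left_eq_sub]
    _ = (hmap a n + starMap op a (n + 1) ∘ₗ hmap a n) ∘ₗ bdry op n := by
        rw [starMap_comp_starMap op a hinv, sub_self, smul_zero, add_zero]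

/-- For a kei `X` and `a ∈ X`, the map `h'_a = h_a + *_a ∘ h_a` is a chain map. -/
theorem hprime_chain_map {X : Type*} (op : X → X → X)
    (hidem : ∀ x : X, op x x = x)
    (hinv : ∀ x b : X, op (op x b) b = x)
    (hdist : ∀ a b c : X, op (op a b) c = op (op a c) (op b c)) (a : X) (n : ℕ) :
    (bdry op (n + 1)) ∘ₗ
        (hmap a (n + 1) + (starMap op a (n + 2)) ∘ₗ hmap a (n + 1)) =
      (hmap a n + (starMap op a (n + 1)) ∘ₗ hmap a n) ∘ₗ (bdry op n) :=
  hprime_chain_map_general op hinv hdist a n
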